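/- arXiv:quant-ph/9605038 — 2 statements merged into one kernel-verified Lean document; each statement's English description precedes it below -/
import Mathlib

section
/- (Horodecki theorem) A state ρ on H₁ ⊗ H₂ is separable if and only if for every positive linear map Λ from operators on H₂ to operators on H₁, the operator (I ⊗ Λ)(ρ) is positive semidefinite. -/
open Matrix
open scoped Kronecker ComplexOrder

/-- A quantum state: positive semidefinite operator of trace one. -/
def IsState {ι : Type*} [Fintype ι] [DecidableEq ι] (A : Matrix ι ι ℂ) : Prop :=
  A.PosSemidef ∧ A.trace = 1

/-- Finite convex combinations of product states on `C^m ⊗ C^n`. -/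
def SepCombos (m n : ℕ) : Set (Matrix (Fin m × Fin n) (Fin m × Fin n) ℂ) :=
  {ρ | ∃ (k : ℕ) (p : Fin k → ℝ) (σ : Fin k → Matrix (Fin m) (Fin m) ℂ)
      (τ : Fin k → Matrix (Fin n) (Fin n) ℂ),
      (∀ i, 0 ≤ p i) ∧ (∑ i, p i) = 1 ∧ (∀ i, IsState (σ i)) ∧ (∀ i, IsState (τ i)) ∧
      ρ = ∑ i, (p i : ℂ) • (σ i ⊗ₖ τ i)}

/-- A separable state: a state in the closure of convex combinations of product states. -/
def SepState {m n : ℕ} (ρ : Matrix (Fin m × Fin n) (Fin m × Fin n) ℂ) : Prop :=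
  IsState ρ ∧ ρ ∈ closure (SepCombos m n)

/-- A positive map: maps positive semidefinite matrices to positive semidefinite ones. -/
def IsPositiveMap {n k : ℕ}
    (Λ : Matrix (Fin n) (Fin n) ℂ →ₗ[ℂ] Matrix (Fin k) (Fin k) ℂ) : Prop :=
  ∀ A, A.PosSemidef → (Λ A).PosSemidef

/-- The map `I ⊗ Λ` acting on operators on `C^m ⊗ C^n`. -/
def idOtimes {m n k : ℕ}
    (Λ : Matrix (Fin n) (Fin n) ℂ →ₗ[ℂ] Matrix (Fin k) (Fin k) ℂ)
    (ρ : Matrix (Fin m × Fin n) (Fin m × Fin n) ℂ) :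
    Matrix (Fin m × Fin k) (Fin m × Fin k) ℂ :=
  fun p q => Λ (fun μ ν => ρ (p.1, μ) (q.1, ν)) p.2 q.2

/-- The map `Λ ⊗ I_k`. -/
def otimesId {n m : ℕ}
    (Λ : Matrix (Fin n) (Fin n) ℂ →ₗ[ℂ] Matrix (Fin m) (Fin m) ℂ) (k : ℕ)
    (A : Matrix (Fin n × Fin k) (Fin n × Fin k) ℂ) :
    Matrix (Fin m × Fin k) (Fin m × Fin k) ℂ :=
  fun p q => Λ (fun i j => A (i, p.2) (j, q.2)) p.1 q.1

/-- Complete positivity. -/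
def IsCompletelyPositive {n m : ℕ}
    (Λ : Matrix (Fin n) (Fin n) ℂ →ₗ[ℂ] Matrix (Fin m) (Fin m) ℂ) : Prop :=
  ∀ k : ℕ, ∀ A : Matrix (Fin n × Fin k) (Fin n × Fin k) ℂ,
    A.PosSemidef → (otimesId Λ k A).PosSemidef

/-- Partial transposition with respect to the second factor. -/
def ptranspose {α β : Type*} (ρ : Matrix (α × β) (α × β) ℂ) : Matrix (α × β) (α × β) ℂ :=
  fun p q => ρ (p.1, q.2) (q.1, p.2)

/-- An orthogonal projection matrix. -/
def IsProjMat {ι : Type*} [Fintype ι] (P : Matrix ι ι ℂ) : Prop :=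
  P.IsHermitian ∧ P * P = P

/-- The transpose map as a linear map. -/
def transposeLM (n : ℕ) : Matrix (Fin n) (Fin n) ℂ →ₗ[ℂ] Matrix (Fin n) (Fin n) ℂ where
  toFun := Matrix.transpose
  map_add' := fun _ _ => Matrix.transpose_add _ _
  map_smul' := fun _ _ => Matrix.transpose_smul _ _



instance {m n : Type*} : LocallyConvexSpace ℝ (Matrix m n ℂ) :=
  inferInstanceAs (LocallyConvexSpace ℝ (m → n → ℂ))

lemma aux_isClosed_nonneg : IsClosed {z : ℂ | 0 ≤ z} := by
  have h : {z : ℂ | 0 ≤ z} = Complex.re ⁻¹' Set.Ici 0 ∩ Complex.im ⁻¹' {0} := by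
    ext z
    simp [Complex.nonneg_iff, eq_comm]
  rw [h]
  exact (isClosed_Ici.preimage Complex.continuous_re).inter
    (isClosed_singleton.preimage Complex.continuous_im)

/-- The quadratic form as a linear map. -/
noncomputable def auxQF {ι : Type*} [Fintype ι] (x : ι → ℂ) : Matrix ι ι ℂ →ₗ[ℂ] ℂ where
  toFun A := star x ⬝ᵥ A *ᵥ x
  map_add' A B := by rw [Matrix.add_mulVec, dotProduct_add]
  map_smul' c A := by
    rw [Matrix.smul_mulVec, dotProduct_smul, RingHom.id_apply, smul_eq_mul]

lemma aux_isClosed_posSemidef {ι : Type*} [Fintype ι] [DecidableEq ι] :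
    IsClosed {A : Matrix ι ι ℂ | A.PosSemidef} := by
  have h : {A : Matrix ι ι ℂ | A.PosSemidef} =
      {A : Matrix ι ι ℂ | Aᴴ = A} ∩ ⋂ x : ι → ℂ, {A | 0 ≤ star x ⬝ᵥ A *ᵥ x} := by
    ext A
    simp only [Set.mem_setOf_eq, Set.mem_inter_iff, Set.mem_iInter]
    exact Matrix.posSemidef_iff_dotProduct_mulVec
  rw [h]
  refine IsClosed.inter (isClosed_eq continuous_id.matrix_conjTranspose continuous_id)
    (isClosed_iInter fun x => ?_)
  exact aux_isClosed_nonneg.preimage (auxQF x).continuous_of_finiteDimensional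

lemma aux_kron_conjTranspose {a b c d : Type*} (A : Matrix a b ℂ) (B : Matrix c d ℂ) :
    (A ⊗ₖ B)ᴴ = Aᴴ ⊗ₖ Bᴴ := by
  ext ⟨i, j⟩ ⟨k, l⟩
  simp [Matrix.conjTranspose_apply, mul_comm]

lemma aux_psd_eq {ι : Type*} [Fintype ι] [DecidableEq ι] {A : Matrix ι ι ℂ}
    (hA : A.PosSemidef) : ∃ B : Matrix ι ι ℂ, A = Bᴴ * B := by
  open scoped MatrixOrder in
  obtain ⟨B, rfl⟩ := CStarAlgebra.nonneg_iff_eq_star_mul_self.mp hA.nonneg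
  exact ⟨B, rfl⟩

lemma aux_posSemidef_kronecker {a b : Type*} [Fintype a] [Fintype b] [DecidableEq a]
    [DecidableEq b] {A : Matrix a a ℂ} {B : Matrix b b ℂ}
    (hA : A.PosSemidef) (hB : B.PosSemidef) : (A ⊗ₖ B).PosSemidef := by
  obtain ⟨P, rfl⟩ := aux_psd_eq hA
  obtain ⟨Q, rfl⟩ := aux_psd_eq hB
  rw [Matrix.mul_kronecker_mul, ← aux_kron_conjTranspose]
  exact Matrix.posSemidef_conjTranspose_mul_self _

lemma aux_posSemidef_smul {ι : Type*} [Fintype ι] {A : Matrix ι ι ℂ} (hA : A.PosSemidef)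
    {c : ℂ} (hc : 0 ≤ c) : (c • A).PosSemidef := by
  have hcs : star c = c := by
    rw [Complex.star_def, Complex.conj_eq_iff_im]
    exact (Complex.nonneg_iff.mp hc).2.symm
  refine Matrix.PosSemidef.of_dotProduct_mulVec_nonneg ?_ ?_
  · show (c • A)ᴴ = c • A
    rw [Matrix.conjTranspose_smul, hcs, hA.1]
  · intro x
    rw [Matrix.smul_mulVec, dotProduct_smul, smul_eq_mul]
    exact mul_nonneg hc (hA.dotProduct_mulVec_nonneg x)

lemma aux_posSemidef_sum {ι κ : Type*} [Fintype κ] (s : Finset ι) (F : ι → Matrix κ κ ℂ)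
    (h : ∀ i ∈ s, (F i).PosSemidef) : (∑ i ∈ s, F i).PosSemidef := by
  induction s using Finset.cons_induction with
  | empty => simpa using Matrix.PosSemidef.zero
  | cons i s hi ih =>
    rw [Finset.sum_cons]
    exact ((h i (Finset.mem_cons_self _ _)).add
      (ih fun j hj => h j (Finset.mem_cons_of_mem hj)))

lemma aux_posSemidef_trace_nonneg {ι : Type*} [Fintype ι] [DecidableEq ι] {A : Matrix ι ι ℂ}
    (hA : A.PosSemidef) : 0 ≤ A.trace := by
  obtain ⟨B, rfl⟩ := aux_psd_eq hA
  rw [Matrix.trace]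
  refine Finset.sum_nonneg fun j _ => ?_
  rw [Matrix.diag_apply, Matrix.mul_apply]
  refine Finset.sum_nonneg fun i _ => ?_
  rw [Matrix.conjTranspose_apply]
  exact star_mul_self_nonneg _

lemma aux_posSemidef_trace_zero {ι : Type*} [Fintype ι] [DecidableEq ι] {A : Matrix ι ι ℂ}
    (hA : A.PosSemidef) (h : A.trace = 0) : A = 0 := by
  obtain ⟨B, rfl⟩ := aux_psd_eq hA
  have hB : B = 0 := by
    have htr : (Bᴴ * B).trace = ((∑ j, ∑ i, Complex.normSq (B i j) : ℝ) : ℂ) := by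
      rw [Matrix.trace]
      push_cast
      refine Finset.sum_congr rfl fun j _ => ?_
      rw [Matrix.diag_apply, Matrix.mul_apply]
      refine Finset.sum_congr rfl fun i _ => ?_
      rw [Matrix.conjTranspose_apply, Complex.star_def, Complex.normSq_eq_conj_mul_self]
    rw [htr] at h
    have h0 : (∑ j, ∑ i, Complex.normSq (B i j) : ℝ) = 0 := by exact_mod_cast h
    ext i j
    have := (Finset.sum_eq_zero_iff_of_nonneg (fun j _ =>
      Finset.sum_nonneg fun i _ => Complex.normSq_nonneg _)).mp h0 j (Finset.mem_univ _)
    have := (Finset.sum_eq_zero_iff_of_nonneg (fun i _ =>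
      Complex.normSq_nonneg _)).mp this i (Finset.mem_univ _)
    simpa using Complex.normSq_eq_zero.mp this
  rw [hB]
  simp

lemma aux_real_smul {V : Type*} [AddCommGroup V] [Module ℂ V] (r : ℝ) (A : V) :
    (r : ℂ) • A = r • A := by
  rw [← smul_one_smul ℂ r A]
  norm_num [Complex.real_smul]

noncomputable def idOtimesLM (m : ℕ) {n k : ℕ}
    (Λ : Matrix (Fin n) (Fin n) ℂ →ₗ[ℂ] Matrix (Fin k) (Fin k) ℂ) :
    Matrix (Fin m × Fin n) (Fin m × Fin n) ℂ →ₗ[ℂ] Matrix (Fin m × Fin k) (Fin m × Fin k) ℂ where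
  toFun := idOtimes Λ
  map_add' A B := by
    ext ⟨a, i⟩ ⟨b, j⟩
    show Λ (fun μ ν => (A + B) (a, μ) (b, ν)) i j = _
    have h : (fun μ ν => (A + B) (a, μ) (b, ν)) =
        (fun μ ν => A (a, μ) (b, ν)) + (fun μ ν => B (a, μ) (b, ν)) := rfl
    erw [h, Λ.map_add]
    rfl
  map_smul' c A := by
    ext ⟨a, i⟩ ⟨b, j⟩
    show Λ (fun μ ν => (c • A) (a, μ) (b, ν)) i j = _
    have h : (fun μ ν => (c • A) (a, μ) (b, ν)) =
        c • (fun μ ν => A (a, μ) (b, ν)) := rfl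
    erw [h, Λ.map_smul]
    rfl

lemma idOtimes_kronecker {m n k : ℕ}
    (Λ : Matrix (Fin n) (Fin n) ℂ →ₗ[ℂ] Matrix (Fin k) (Fin k) ℂ)
    (σ : Matrix (Fin m) (Fin m) ℂ) (τ : Matrix (Fin n) (Fin n) ℂ) :
    idOtimes Λ (σ ⊗ₖ τ) = σ ⊗ₖ (Λ τ) := by
  ext ⟨a, i⟩ ⟨b, j⟩
  show Λ (fun μ ν => (σ ⊗ₖ τ) ((a, μ)) ((b, ν))) i j = σ a b * Λ τ i j
  have h : (fun μ ν => (σ ⊗ₖ τ) ((a, μ)) ((b, ν))) = σ a b • τ := rfl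
  rw [h, Λ.map_smul]
  rfl

lemma sepCombos_convex (m n : ℕ) : Convex ℝ (SepCombos m n) := by
  intro x hx y hy a b ha hb hab
  obtain ⟨k₁, p₁, σ₁, τ₁, hp₁, hs₁, hσ₁, hτ₁, rfl⟩ := hx
  obtain ⟨k₂, p₂, σ₂, τ₂, hp₂, hs₂, hσ₂, hτ₂, rfl⟩ := hy
  refine ⟨k₁ + k₂, Fin.append (fun i => a * p₁ i) (fun i => b * p₂ i),
    Fin.append σ₁ σ₂, Fin.append τ₁ τ₂, ?_, ?_, ?_, ?_, ?_⟩
  · intro i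
    refine Fin.addCases (fun i => ?_) (fun i => ?_) i
    · simp only [Fin.append_left]
      exact mul_nonneg ha (hp₁ i)
    · simp only [Fin.append_right]
      exact mul_nonneg hb (hp₂ i)
  · rw [Fin.sum_univ_add]
    simp only [Fin.append_left, Fin.append_right, ← Finset.mul_sum, hs₁, hs₂]
    simpa using hab
  · intro i
    refine Fin.addCases (fun i => ?_) (fun i => ?_) i
    · simpa only [Fin.append_left] using hσ₁ i
    · simpa only [Fin.append_right] using hσ₂ i
  · intro i
    refine Fin.addCases (fun i => ?_) (fun i => ?_) i
    · simpa only [Fin.append_left] using hτ₁ i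
    · simpa only [Fin.append_right] using hτ₂ i
  · rw [Fin.sum_univ_add]
    simp only [Fin.append_left, Fin.append_right]
    rw [Finset.smul_sum, Finset.smul_sum]
    congr 1 <;>
    · refine Finset.sum_congr rfl fun i _ => ?_
      rw [← aux_real_smul, smul_smul]
      norm_cast

lemma aux_trace_repr {ι : Type*} [Fintype ι] [DecidableEq ι] (ℓ : Matrix ι ι ℂ →ₗ[ℂ] ℂ)
    (A : Matrix ι ι ℂ) :
    ((Matrix.of fun p q => ℓ (single q p 1)) * A).trace = ℓ A := by
  conv_rhs => rw [matrix_eq_sum_single A]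
  rw [map_sum]
  simp only [map_sum]
  rw [Matrix.trace]
  simp only [Matrix.diag_apply, Matrix.mul_apply, Matrix.of_apply]
  rw [Finset.sum_comm]
  refine Finset.sum_congr rfl fun q _ => Finset.sum_congr rfl fun p _ => ?_
  have h : single q p (A q p) = A q p • single q p 1 := by
    rw [Matrix.smul_single, smul_eq_mul, mul_one]
  rw [h, ℓ.map_smul, smul_eq_mul, mul_comm]

/-- Exchange the order of a quadruple sum. -/
lemma swap4 {α : Type*} [AddCommMonoid α] {a b c d : Type*} [Fintype a] [Fintype b] [Fintype c]
    [Fintype d] (f : a → b → c → d → α) :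
    ∑ x, ∑ y, ∑ z, ∑ w, f x y z w = ∑ y, ∑ z, ∑ x, ∑ w, f x y z w := by
  rw [Finset.sum_comm]
  exact Finset.sum_congr rfl fun y _ => Finset.sum_comm

/-- The positive map associated with an entanglement witness `V`. -/
noncomputable def lamOfV {m n : ℕ} (V : Matrix (Fin m × Fin n) (Fin m × Fin n) ℂ) :
    Matrix (Fin n) (Fin n) ℂ →ₗ[ℂ] Matrix (Fin m) (Fin m) ℂ where
  toFun X := Matrix.of fun i j => ∑ μ, ∑ ν, V (j, μ) (i, ν) * X ν μ
  map_add' X Y := by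
    ext i j
    simp [Matrix.add_apply, mul_add, Finset.sum_add_distrib]
  map_smul' c X := by
    ext i j
    simp only [Matrix.of_apply, Matrix.smul_apply, smul_eq_mul, RingHom.id_apply, Finset.mul_sum]
    exact Finset.sum_congr rfl fun μ _ => Finset.sum_congr rfl fun ν _ => by ring

lemma lam_qf {m n : ℕ} (V : Matrix (Fin m × Fin n) (Fin m × Fin n) ℂ)
    (X : Matrix (Fin n) (Fin n) ℂ) (ψ : Fin m → ℂ) :
    star ψ ⬝ᵥ (lamOfV V X) *ᵥ ψ = (V * ((vecMulVec (star ψ) ψ) ⊗ₖ X)).trace := by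
  have lhs : star ψ ⬝ᵥ (lamOfV V X) *ᵥ ψ
      = ∑ a, ∑ b, ∑ μ, ∑ ν, V (b, μ) (a, ν) * (star (ψ a) * ψ b * X ν μ) := by
    simp only [dotProduct, Matrix.mulVec, lamOfV, LinearMap.coe_mk, AddHom.coe_mk,
      Matrix.of_apply, Pi.star_apply, Finset.mul_sum, Finset.sum_mul]
    try exact Finset.sum_congr rfl fun a _ => Finset.sum_congr rfl fun b _ =>
      Finset.sum_congr rfl fun μ _ => Finset.sum_congr rfl fun ν _ => by ring
  have rhs : (V * ((vecMulVec (star ψ) ψ) ⊗ₖ X)).trace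
      = ∑ b, ∑ μ, ∑ a, ∑ ν, V (b, μ) (a, ν) * (star (ψ a) * ψ b * X ν μ) := by
    simp only [Matrix.trace, Matrix.diag_apply, Matrix.mul_apply, Matrix.kroneckerMap_apply,
      Matrix.vecMulVec_apply, Pi.star_apply, Fintype.sum_prod_type]
    try exact Finset.sum_congr rfl fun b _ => Finset.sum_congr rfl fun μ _ =>
      Finset.sum_congr rfl fun a _ => Finset.sum_congr rfl fun ν _ => by ring
  rw [lhs, rhs, swap4]

lemma vecMulVec_star_posSemidef {m : ℕ} (ψ : Fin m → ℂ) :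
    (vecMulVec (star ψ) ψ).PosSemidef := by
  refine Matrix.PosSemidef.of_dotProduct_mulVec_nonneg ?_ ?_
  · show (vecMulVec (star ψ) ψ)ᴴ = vecMulVec (star ψ) ψ
    ext a b
    simp only [Matrix.conjTranspose_apply, Matrix.vecMulVec_apply, Pi.star_apply, star_mul',
      star_star]
    ring
  · intro x
    have h : star x ⬝ᵥ (vecMulVec (star ψ) ψ) *ᵥ x
        = star (∑ b, ψ b * x b) * (∑ b, ψ b * x b) := by
      rw [star_sum, Finset.sum_mul_sum]
      simp only [dotProduct, Matrix.mulVec, Matrix.vecMulVec_apply, Pi.star_apply, star_mul',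
        Finset.mul_sum]
      try exact Finset.sum_congr rfl fun a _ => Finset.sum_congr rfl fun b _ => by ring
    rw [h]
    exact star_mul_self_nonneg _

lemma lam_pos {m n : ℕ} {V : Matrix (Fin m × Fin n) (Fin m × Fin n) ℂ} (hV : V.IsHermitian)
    (hpos : ∀ (σ : Matrix (Fin m) (Fin m) ℂ) (τ : Matrix (Fin n) (Fin n) ℂ),
      σ.PosSemidef → τ.PosSemidef → 0 ≤ (V * (σ ⊗ₖ τ)).trace) :
    IsPositiveMap (lamOfV V) := by
  have hV' : ∀ p q, star (V p q) = V q p := fun p q => by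
    rw [← Matrix.conjTranspose_apply, hV]
  intro X hX
  have hX' : ∀ p q, star (X p q) = X q p := fun p q => by
    rw [← Matrix.conjTranspose_apply, hX.1]
  refine Matrix.PosSemidef.of_dotProduct_mulVec_nonneg ?_ ?_
  · show (lamOfV V X)ᴴ = lamOfV V X
    ext i j
    show star ((lamOfV V X) j i) = (lamOfV V X) i j
    show star (∑ μ, ∑ ν, V (i, μ) (j, ν) * X ν μ) = ∑ μ, ∑ ν, V (j, μ) (i, ν) * X ν μ
    rw [star_sum]
    simp only [star_sum, star_mul']
    rw [Finset.sum_comm]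
    refine Finset.sum_congr rfl fun μ _ => Finset.sum_congr rfl fun ν _ => ?_
    rw [hV', hX']
    try ring
  · intro ψ
    rw [lam_qf]
    exact hpos _ _ (vecMulVec_star_posSemidef ψ) hX

lemma phi_eval {m n : ℕ} (V ρ : Matrix (Fin m × Fin n) (Fin m × Fin n) ℂ) :
    star (fun p : Fin m × Fin m => if p.1 = p.2 then (1 : ℂ) else 0) ⬝ᵥ
        (idOtimes (lamOfV V) ρ) *ᵥ (fun p : Fin m × Fin m => if p.1 = p.2 then (1 : ℂ) else 0)
      = (V * ρ).trace := by
  have lhs : star (fun p : Fin m × Fin m => if p.1 = p.2 then (1 : ℂ) else 0) ⬝ᵥ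
        (idOtimes (lamOfV V) ρ) *ᵥ (fun p : Fin m × Fin m => if p.1 = p.2 then (1 : ℂ) else 0)
      = ∑ a, ∑ b, ∑ μ, ∑ ν, V (b, μ) (a, ν) * ρ (a, ν) (b, μ) := by
    have hstar : star (fun p : Fin m × Fin m => if p.1 = p.2 then (1 : ℂ) else 0)
        = (fun p : Fin m × Fin m => if p.1 = p.2 then (1 : ℂ) else 0) := by
      funext p
      simp [Pi.star_apply, apply_ite (star : ℂ → ℂ)]
    rw [hstar]
    simp only [dotProduct, Matrix.mulVec, Fintype.sum_prod_type,
      ite_mul, mul_ite, one_mul, zero_mul, mul_one, mul_zero,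
      Finset.sum_ite_eq, Finset.sum_ite_eq', Finset.mem_univ, if_true]
    show ∑ a, ∑ b, idOtimes (lamOfV V) ρ (a, a) (b, b) = _
    exact Finset.sum_congr rfl fun a _ => Finset.sum_congr rfl fun b _ => rfl
  have rhs : (V * ρ).trace = ∑ b, ∑ μ, ∑ a, ∑ ν, V (b, μ) (a, ν) * ρ (a, ν) (b, μ) := by
    simp only [Matrix.trace, Matrix.diag_apply, Matrix.mul_apply, Fintype.sum_prod_type]
  rw [lhs, rhs, swap4]

/-- Horodecki theorem: `ρ` is separable iff `(I ⊗ Λ)(ρ) ≥ 0`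
for every positive map `Λ` from operators on `H₂` to operators on `H₁`. -/
theorem separable_iff_positive_maps {m n : ℕ}
    (ρ : Matrix (Fin m × Fin n) (Fin m × Fin n) ℂ) (hρ : IsState ρ) :
    SepState ρ ↔
      ∀ Λ : Matrix (Fin n) (Fin n) ℂ →ₗ[ℂ] Matrix (Fin m) (Fin m) ℂ,
        IsPositiveMap Λ → (idOtimes Λ ρ).PosSemidef := by
  constructor
  · rintro ⟨-, hmem⟩ Λ hΛ
    have hclosed : IsClosed {A : Matrix (Fin m × Fin n) (Fin m × Fin n) ℂ |
        ((idOtimesLM m Λ) A).PosSemidef} :=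
      aux_isClosed_posSemidef.preimage (idOtimesLM m Λ).continuous_of_finiteDimensional
    have hsub : SepCombos m n ⊆ {A | ((idOtimesLM m Λ) A).PosSemidef} := by
      rintro A ⟨k, p, σ, τ, hp, -, hσ, hτ, rfl⟩
      show (idOtimes Λ (∑ i, (p i : ℂ) • (σ i ⊗ₖ τ i))).PosSemidef
      have heq : idOtimes Λ (∑ i, (p i : ℂ) • (σ i ⊗ₖ τ i))
          = ∑ i, (p i : ℂ) • (σ i ⊗ₖ (Λ (τ i))) := by
        rw [show idOtimes Λ (∑ i, (p i : ℂ) • (σ i ⊗ₖ τ i))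
          = (idOtimesLM m Λ) (∑ i, (p i : ℂ) • (σ i ⊗ₖ τ i)) from rfl, map_sum]
        refine Finset.sum_congr rfl fun i _ => ?_
        rw [LinearMap.map_smul,
          show (idOtimesLM m Λ) (σ i ⊗ₖ τ i) = idOtimes Λ (σ i ⊗ₖ τ i) from rfl,
          idOtimes_kronecker]
      rw [heq]
      refine aux_posSemidef_sum _ _ fun i _ => ?_
      exact aux_posSemidef_smul (aux_posSemidef_kronecker (hσ i).1 (hΛ _ (hτ i).1))
        (Complex.zero_le_real.mpr (hp i))
    exact closure_minimal hsub hclosed hmem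
  · intro h
    refine ⟨hρ, ?_⟩
    by_contra hmem
    have hconv : Convex ℝ (closure (SepCombos m n)) := (sepCombos_convex m n).closure
    obtain ⟨f, u, hfs, hfρ⟩ := geometric_hahn_banach_closed_point hconv isClosed_closure hmem
    have hr : ∀ (r : ℝ) (A : Matrix (Fin m × Fin n) (Fin m × Fin n) ℂ),
        f ((r : ℂ) • A) = r * f A := by
      intro r A
      rw [aux_real_smul, f.map_smul, smul_eq_mul]
    have key : ∀ (r s : ℝ) (A : Matrix (Fin m × Fin n) (Fin m × Fin n) ℂ),
        f (((r : ℂ) + (s : ℂ) * Complex.I) • A) = r * f A + s * f (Complex.I • A) := by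
      intro r s A
      rw [add_smul, mul_smul, f.map_add, hr, hr]
    let ℓ : Matrix (Fin m × Fin n) (Fin m × Fin n) ℂ →ₗ[ℂ] ℂ :=
      { toFun := fun A => (f A : ℂ) - Complex.I * (f (Complex.I • A) : ℂ),
        map_add' := by
          intro A B
          rw [f.map_add, smul_add, f.map_add]
          push_cast
          ring
        map_smul' := by
          intro c A
          dsimp only [RingHom.id_apply]
          have e1 : f (c • A) = c.re * f A + c.im * f (Complex.I • A) := by
            rw [show c • A = ((c.re : ℂ) + (c.im : ℂ) * Complex.I) • A by
              rw [Complex.re_add_im]]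
            exact key _ _ _
          have e2 : f (Complex.I • (c • A)) = (-c.im) * f A + c.re * f (Complex.I • A) := by
            rw [show Complex.I • (c • A)
                = (((-c.im : ℝ) : ℂ) + ((c.re : ℝ) : ℂ) * Complex.I) • A by
              rw [smul_smul]
              congr 1
              apply Complex.ext <;> simp]
            exact key _ _ _
          rw [e1, e2]
          apply Complex.ext <;> simp <;> ring }
    set K : Matrix (Fin m × Fin n) (Fin m × Fin n) ℂ :=
      Matrix.of fun p q => ℓ (single q p 1) with hK
    have htrK : ∀ A, (K * A).trace = (f A : ℂ) - Complex.I * (f (Complex.I • A) : ℂ) :=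
      fun A => aux_trace_repr ℓ A
    set W : Matrix (Fin m × Fin n) (Fin m × Fin n) ℂ := (2⁻¹ : ℂ) • (K + Kᴴ) with hW
    have htrW : ∀ A : Matrix (Fin m × Fin n) (Fin m × Fin n) ℂ, Aᴴ = A →
        (W * A).trace = ((f A : ℝ) : ℂ) := by
      intro A hA
      have h2 : (Kᴴ * A).trace = star ((K * A).trace) := by
        calc (Kᴴ * A).trace = (Kᴴ * Aᴴ).trace := by rw [hA]
          _ = ((A * K)ᴴ).trace := by rw [Matrix.conjTranspose_mul]
          _ = star ((A * K).trace) := Matrix.trace_conjTranspose _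
          _ = star ((K * A).trace) := by rw [Matrix.trace_mul_comm]
      rw [hW, Matrix.smul_mul, Matrix.trace_smul, Matrix.add_mul, Matrix.trace_add, h2, htrK,
        smul_eq_mul]
      apply Complex.ext <;> simp <;> ring
    have hermW : Wᴴ = W := by
      rw [hW, Matrix.conjTranspose_smul, Matrix.conjTranspose_add,
        Matrix.conjTranspose_conjTranspose]
      congr 1
      · apply Complex.ext <;> simp
      · exact add_comm _ _
    set V : Matrix (Fin m × Fin n) (Fin m × Fin n) ℂ := ((u : ℝ) : ℂ) • 1 - W with hV
    have hermV : V.IsHermitian := by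
      show Vᴴ = V
      rw [hV, Matrix.conjTranspose_sub, Matrix.conjTranspose_smul, Matrix.conjTranspose_one,
        hermW]
      congr 2
      apply Complex.ext <;> simp
    have htrV : ∀ A : Matrix (Fin m × Fin n) (Fin m × Fin n) ℂ, Aᴴ = A → A.trace = 1 →
        (V * A).trace = ((u - f A : ℝ) : ℂ) := by
      intro A hA htA
      rw [hV, Matrix.sub_mul, Matrix.trace_sub, Matrix.smul_mul, Matrix.trace_smul, one_mul,
        htA, htrW A hA, smul_eq_mul, mul_one]
      push_cast
      ring
    have hwit : ∀ (σ : Matrix (Fin m) (Fin m) ℂ) (τ : Matrix (Fin n) (Fin n) ℂ),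
        σ.PosSemidef → τ.PosSemidef → 0 ≤ (V * (σ ⊗ₖ τ)).trace := by
      intro σ τ hσ hτ
      by_cases h0 : σ.trace = 0
      · rw [aux_posSemidef_trace_zero hσ h0, Matrix.zero_kronecker, Matrix.mul_zero,
          Matrix.trace_zero]
      by_cases h1 : τ.trace = 0
      · rw [aux_posSemidef_trace_zero hτ h1, Matrix.kronecker_zero, Matrix.mul_zero,
          Matrix.trace_zero]
      have hσt := aux_posSemidef_trace_nonneg hσ
      have hτt := aux_posSemidef_trace_nonneg hτ
      set a : ℝ := σ.trace.re with ha
      set b : ℝ := τ.trace.re with hb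
      have hσre : σ.trace = (a : ℂ) := by
        apply Complex.ext
        · simp [ha]
        · simp [(Complex.nonneg_iff.mp hσt).2.symm]
      have hτre : τ.trace = (b : ℂ) := by
        apply Complex.ext
        · simp [hb]
        · simp [(Complex.nonneg_iff.mp hτt).2.symm]
      have ha0 : 0 ≤ a := by
        have := (Complex.nonneg_iff.mp hσt).1; simpa [ha] using this
      have hb0 : 0 ≤ b := by
        have := (Complex.nonneg_iff.mp hτt).1; simpa [hb] using this
      have haz : (a : ℂ) ≠ 0 := by
        rw [← hσre]; exact h0
      have hbz : (b : ℂ) ≠ 0 := by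
        rw [← hτre]; exact h1
      set σ' := ((a : ℂ))⁻¹ • σ with hσ'
      set τ' := ((b : ℂ))⁻¹ • τ with hτ'
      have hinva : (0 : ℂ) ≤ ((a : ℂ))⁻¹ := by
        rw [show ((a : ℂ))⁻¹ = ((a⁻¹ : ℝ) : ℂ) by push_cast; ring]
        exact Complex.zero_le_real.mpr (inv_nonneg.mpr ha0)
      have hinvb : (0 : ℂ) ≤ ((b : ℂ))⁻¹ := by
        rw [show ((b : ℂ))⁻¹ = ((b⁻¹ : ℝ) : ℂ) by push_cast; ring]
        exact Complex.zero_le_real.mpr (inv_nonneg.mpr hb0)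
      have hσ's : IsState σ' := by
        refine ⟨aux_posSemidef_smul hσ hinva, ?_⟩
        rw [hσ', Matrix.trace_smul, smul_eq_mul, hσre, inv_mul_cancel₀ haz]
      have hτ's : IsState τ' := by
        refine ⟨aux_posSemidef_smul hτ hinvb, ?_⟩
        rw [hτ', Matrix.trace_smul, smul_eq_mul, hτre, inv_mul_cancel₀ hbz]
      have hmem' : σ' ⊗ₖ τ' ∈ SepCombos m n := by
        refine ⟨1, fun _ => 1, fun _ => σ', fun _ => τ', fun _ => zero_le_one, by simp,
          fun _ => hσ's, fun _ => hτ's, by simp⟩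
      have hlt : f (σ' ⊗ₖ τ') < u := hfs _ (subset_closure hmem')
      have htr1 : (σ' ⊗ₖ τ').trace = 1 := by
        rw [Matrix.trace_kronecker, hσ's.2, hτ's.2, mul_one]
      have hherm : (σ' ⊗ₖ τ')ᴴ = σ' ⊗ₖ τ' :=
        (aux_posSemidef_kronecker hσ's.1 hτ's.1).1
      have hval : (V * (σ' ⊗ₖ τ')).trace = ((u - f (σ' ⊗ₖ τ') : ℝ) : ℂ) :=
        htrV _ hherm htr1
      have hpos' : 0 ≤ (V * (σ' ⊗ₖ τ')).trace := by
        rw [hval]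
        exact Complex.zero_le_real.mpr (by linarith)
      have hdecomp : σ ⊗ₖ τ = (a : ℂ) • (b : ℂ) • (σ' ⊗ₖ τ') := by
        rw [hσ', hτ', Matrix.smul_kronecker, Matrix.kronecker_smul, smul_smul, smul_smul,
          smul_smul, show (a : ℂ) * (b : ℂ) * ((a : ℂ))⁻¹ * ((b : ℂ))⁻¹
            = ((a : ℂ) * ((a : ℂ))⁻¹) * ((b : ℂ) * ((b : ℂ))⁻¹) by ring,
          mul_inv_cancel₀ haz, mul_inv_cancel₀ hbz, one_mul, one_smul]
      rw [hdecomp, Matrix.mul_smul, Matrix.mul_smul, Matrix.trace_smul, Matrix.trace_smul,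
        smul_eq_mul, smul_eq_mul]
      exact mul_nonneg (Complex.zero_le_real.mpr ha0)
        (mul_nonneg (Complex.zero_le_real.mpr hb0) hpos')
    have hΛ := lam_pos hermV hwit
    have hpsd := h (lamOfV V) hΛ
    have hquad := hpsd.dotProduct_mulVec_nonneg (fun p : Fin m × Fin m => if p.1 = p.2 then (1 : ℂ) else 0)
    rw [phi_eval] at hquad
    rw [htrV ρ hρ.1.1 hρ.2] at hquad
    have hfin : (0 : ℝ) ≤ u - f ρ := by exact_mod_cast hquad
    linarith
end

section
/- Let ρ = p|ψ₁⟩⟨ψ₁| + (1−p)|ψ₂⟩⟨ψ₂| on C² ⊗ C², where |ψ₁⟩ = a e₁⊗e₁ + b e₂⊗e₂, |ψ₂⟩ = a e₁⊗e₂ + b e₂⊗e₁, a,b > 0, a² + b² = 1, 0 ≤ p ≤ 1. If ab ≠ 0 and p ≠ 1/2, then the partial transposition ρ^{T₂} is not positive semidefinite; in particular ρ is inseparable. -/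
open Matrix
open scoped Kronecker ComplexOrder

lemma kron_conjT {l m n p : Type*} (A : Matrix l m ℂ) (B : Matrix n p ℂ) :
    (A ⊗ₖ B)ᴴ = Aᴴ ⊗ₖ Bᴴ := by
  ext ⟨i, j⟩ ⟨k, l⟩
  simp [conjTranspose_apply, kroneckerMap_apply, mul_comm]

lemma psd_kron {m n : ℕ} {A : Matrix (Fin m) (Fin m) ℂ} {B : Matrix (Fin n) (Fin n) ℂ}
    (hA : A.PosSemidef) (hB : B.PosSemidef) : (A ⊗ₖ B).PosSemidef := by
  exact hA.kronecker hB

lemma psd_smul {ι : Type*} [Fintype ι] {c : ℝ} (hc : 0 ≤ c) {M : Matrix ι ι ℂ}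
    (hM : M.PosSemidef) : ((c : ℂ) • M).PosSemidef := by
  refine PosSemidef.of_dotProduct_mulVec_nonneg ?_ fun x => ?_
  · unfold Matrix.IsHermitian at *
    rw [conjTranspose_smul, hM.1]
    congr 1
    simp [Complex.star_def, Complex.conj_ofReal]
  · rw [smul_mulVec, dotProduct_smul, smul_eq_mul]
    exact mul_nonneg (by exact_mod_cast hc) (hM.dotProduct_mulVec_nonneg x)

lemma psd_add {ι : Type*} [Fintype ι] {M N : Matrix ι ι ℂ} (hM : M.PosSemidef)
    (hN : N.PosSemidef) : (M + N).PosSemidef := by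
  refine PosSemidef.of_dotProduct_mulVec_nonneg (hM.1.add hN.1) fun x => ?_
  rw [add_mulVec, dotProduct_add]
  exact add_nonneg (hM.dotProduct_mulVec_nonneg x) (hN.dotProduct_mulVec_nonneg x)

lemma psd_sum {ι κ : Type*} [Fintype ι] [Fintype κ] (f : κ → Matrix ι ι ℂ)
    (h : ∀ i, (f i).PosSemidef) : (∑ i, f i).PosSemidef := by
  classical
  refine Finset.sum_induction f _ (fun _ _ => psd_add) Matrix.PosSemidef.zero fun i _ => h i

lemma isClosed_psd {ι : Type*} [Fintype ι] : IsClosed {M : Matrix ι ι ℂ | M.PosSemidef} := by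
  have : {M : Matrix ι ι ℂ | M.PosSemidef} =
      {M | Mᴴ = M} ∩ ⋂ x : ι → ℂ, {M | 0 ≤ star x ⬝ᵥ M *ᵥ x} := by
    ext M
    simp [Matrix.posSemidef_iff_dotProduct_mulVec, Matrix.IsHermitian, Set.mem_iInter]
  rw [this]
  exact (isClosed_eq continuous_id.matrix_conjTranspose continuous_id).inter
    (isClosed_iInter fun x => isClosed_le continuous_const
      (Continuous.dotProduct continuous_const
        (continuous_id.matrix_mulVec continuous_const)))

lemma ptranspose_kron {m n : ℕ} (A : Matrix (Fin m) (Fin m) ℂ) (B : Matrix (Fin n) (Fin n) ℂ) :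
    ptranspose (A ⊗ₖ B) = A ⊗ₖ Bᵀ := by
  ext ⟨i, j⟩ ⟨k, l⟩
  simp [ptranspose, kroneckerMap_apply, transpose_apply]

lemma ptranspose_continuous {α β : Type*} :
    Continuous (ptranspose : Matrix (α × β) (α × β) ℂ → _) :=
  continuous_matrix fun p q => continuous_id.matrix_elem (p.1, q.2) (q.1, p.2)

lemma ptranspose_sum {α β κ : Type*} [Fintype κ] (f : κ → Matrix (α × β) (α × β) ℂ) :
    ptranspose (∑ i, f i) = ∑ i, ptranspose (f i) := by
  ext p q
  simp [ptranspose, Matrix.sum_apply]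

lemma ptranspose_smul {α β : Type*} (c : ℂ) (M : Matrix (α × β) (α × β) ℂ) :
    ptranspose (c • M) = c • ptranspose M := rfl

lemma sep_ppt {m n : ℕ} {ρ : Matrix (Fin m × Fin n) (Fin m × Fin n) ℂ}
    (h : ρ ∈ closure (SepCombos m n)) : (ptranspose ρ).PosSemidef := by
  have hsub : SepCombos m n ⊆ ptranspose ⁻¹' {M | M.PosSemidef} := by
    rintro ρ' ⟨k, p, σ, τ, hp, -, hσ, hτ, rfl⟩
    simp only [Set.mem_preimage, Set.mem_setOf_eq, ptranspose_sum]
    refine psd_sum _ fun i => ?_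
    rw [ptranspose_smul, ptranspose_kron]
    exact psd_smul (hp i) (psd_kron (hσ i).1 (hτ i).1.transpose)
  exact closure_minimal hsub (isClosed_psd.preimage ptranspose_continuous) h

/-- the mixture `p|ψ₁⟩⟨ψ₁| + (1−p)|ψ₂⟩⟨ψ₂|` has non-PSD partial
transpose (hence is inseparable) whenever `ab ≠ 0` and `p ≠ 1/2`. -/
theorem mixture_not_ppt (a b p : ℝ) (ha : 0 < a) (hb : 0 < b)
    (hab : a ^ 2 + b ^ 2 = 1) (hp0 : 0 ≤ p) (hp1 : p ≤ 1)
    (habne : a * b ≠ 0) (hphalf : p ≠ 1 / 2) :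
    let ψ₁ : Fin 2 × Fin 2 → ℂ :=
      fun q => if q.1 = q.2 then (if q.1 = 0 then (a : ℂ) else (b : ℂ)) else 0
    let ψ₂ : Fin 2 × Fin 2 → ℂ :=
      fun q => if q.1 = q.2 then 0 else (if q.1 = 0 then (a : ℂ) else (b : ℂ))
    let ρ := (p : ℂ) • Matrix.vecMulVec ψ₁ (star ψ₁)
      + ((1 - p : ℝ) : ℂ) • Matrix.vecMulVec ψ₂ (star ψ₂)
    ¬ (ptranspose ρ).PosSemidef ∧ ¬ SepState ρ := by
  intro ψ₁ ψ₂ ρ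
  have key : ¬ (ptranspose ρ).PosSemidef := by
    intro hpsd
    rcases lt_or_gt_of_ne hphalf with hc | hc
    · -- p < 1/2 : test vector supported on (0,0), (1,1)
      set x : Fin 2 × Fin 2 → ℂ :=
        fun t => ((if t = (0, 0) then b else if t = (1, 1) then -a else 0 : ℝ) : ℂ) with hx
      have h2 := hpsd.dotProduct_mulVec_nonneg x
      have hval : star x ⬝ᵥ (ptranspose ρ) *ᵥ x = ((2 * a ^ 2 * b ^ 2 * (2 * p - 1) : ℝ) : ℂ) := by
        simp only [hx, ρ, ψ₁, ψ₂, ptranspose, dotProduct, mulVec, Matrix.add_apply,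
          Matrix.smul_apply, vecMulVec_apply, Pi.star_apply, Fintype.sum_prod_type,
          Fin.sum_univ_two, Complex.conj_ofReal, RCLike.star_def]
        norm_num [Prod.ext_iff]
        push_cast
        ring
      rw [hval] at h2
      have h3 : (0:ℝ) ≤ 2 * a ^ 2 * b ^ 2 * (2 * p - 1) := by exact_mod_cast h2
      have hprod : 0 < a ^ 2 * b ^ 2 := by positivity
      nlinarith [mul_pos hprod (show (0:ℝ) < 1 - 2 * p by linarith)]
    · set x : Fin 2 × Fin 2 → ℂ :=
        fun t => ((if t = (0, 1) then b else if t = (1, 0) then -a else 0 : ℝ) : ℂ) with hx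
      have h2 := hpsd.dotProduct_mulVec_nonneg x
      have hval : star x ⬝ᵥ (ptranspose ρ) *ᵥ x = ((2 * a ^ 2 * b ^ 2 * (1 - 2 * p) : ℝ) : ℂ) := by
        simp only [hx, ρ, ψ₁, ψ₂, ptranspose, dotProduct, mulVec, Matrix.add_apply,
          Matrix.smul_apply, vecMulVec_apply, Pi.star_apply, Fintype.sum_prod_type,
          Fin.sum_univ_two, Complex.conj_ofReal, RCLike.star_def]
        norm_num [Prod.ext_iff]
        push_cast
        ring
      rw [hval] at h2
      have h3 : (0:ℝ) ≤ 2 * a ^ 2 * b ^ 2 * (1 - 2 * p) := by exact_mod_cast h2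
      have hprod : 0 < a ^ 2 * b ^ 2 := by positivity
      nlinarith [mul_pos hprod (show (0:ℝ) < 2 * p - 1 by linarith)]
  exact ⟨key, fun hs => key (sep_ppt hs.2)⟩
end
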